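/- arXiv:1408.5969 — 2 statements merged into one kernel-verified Lean document; each statement's English description precedes it below -/
import Mathlib

section
/- For a fixed modular game and a fixed player, there is a one-to-one correspondence (bijection) between the modular strategies of that player and the strategy trees encoding them. -/
/-- A recursive game graph presented module-wise for a fixed player: each
module has an entry, every vertex has at most k (distinct) local successors
(returns of a call being the successors of the call), and vertices of the
fixed player are marked by `isP0`. -/
structure ModGame (V : Type) (k : ℕ) where
  M : Type
  entry : M → V
  succs : V → Fin k → Option V
  isP0 : V → Prop
  distinct : ∀ v (i j : Fin k), (succs v i).isSome →
    succs v i = succs v j → i = j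

inductive Lab (V : Type) (k : ℕ) where
  | dummy : Lab V k
  | nd : V → Option (Fin k) → Lab V k

/-- A strategy tree: a k-ary tree for each module, whose root is labeled by
the entry of the module, in which the subtree of each module is its unrolling
(children of a node labeled v follow the successors of v, dummies pad the
tree to full k-ary branching), and each vertex of the fixed player carries
the index of the successor selected by the encoded strategy. -/
structure StrategyTree {V : Type} {k : ℕ} (G : ModGame V k) where
  lab : G.M → List (Fin k) → Lab V k
  root : ∀ m, ∃ c, lab m [] = Lab.nd (G.entry m) c
  child_nd : ∀ m p v c (i : Fin k), lab m p = Lab.nd v c →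
      (∀ v', G.succs v i = some v' → ∃ c', lab m (p ++ [i]) = Lab.nd v' c') ∧
      (G.succs v i = none → lab m (p ++ [i]) = Lab.dummy)
  child_dummy : ∀ m p (i : Fin k), lab m p = Lab.dummy →
      lab m (p ++ [i]) = Lab.dummy
  choice : ∀ m p v c, lab m p = Lab.nd v c →
      (G.isP0 v → ∃ j, c = some j ∧ (G.succs v j).isSome) ∧
      (¬ G.isP0 v → c = none)

/-- A valid local memory of module m: a sequence of vertices starting at the
entry of m and following local successors. -/
def ValidMem {V : Type} {k : ℕ} (G : ModGame V k) (m : G.M)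
    (l : List V) : Prop :=
  l.head? = some (G.entry m) ∧
    List.Chain' (fun a b => ∃ i, G.succs a i = some b) l

/-- A modular strategy of the fixed player: a family of local strategies, one
per module, selecting a legal move exactly at the valid local memories ending
in a vertex of the player. -/
structure ModStrat {V : Type} {k : ℕ} (G : ModGame V k) where
  f : G.M → List V → Option V
  dom : ∀ m l, (f m l).isSome ↔
    (ValidMem G m l ∧ ∃ v, l.getLast? = some v ∧ G.isP0 v)
  legal : ∀ m l v u, l.getLast? = some u → f m l = some v →
    ∃ i, G.succs u i = some v

/-!
Successors of a vertex carry distinct indices, so a position of the tree of module `m` (an index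
path from the root) that is not padded by dummies is the same thing as a valid local memory of
`m`, namely the trace of the vertices visited along the path. Along this correspondence the
unrolling fixes every label of a strategy tree except the index chosen at the vertices of the
player, and a modular strategy is nothing but such a choice at each valid memory ending in a
vertex of the player.
-/

namespace ModGame

variable {V : Type} {k : ℕ} (G : ModGame V k)

abbrev Adj (u v : V) : Prop := ∃ i, G.succs u i = some v

open Classical in
noncomputable def succIndex (u v : V) : Option (Fin k) :=
  if h : G.Adj u v then some h.choose else none

/-- The trace and the last vertex of the local path leaving `u` along the successor indices
`p`, if all these successors exist. -/
def follow : V → List (Fin k) → Option (List V × V)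
  | u, [] => some ([u], u)
  | u, i :: p => (G.succs u i).bind fun v => (follow v p).map fun lw => (u :: lw.1, lw.2)

noncomputable def indexPath : List V → Option (List (Fin k))
  | [] => some []
  | [_] => some []
  | u :: v :: l => (G.succIndex u v).bind fun i => (indexPath (v :: l)).map (i :: ·)

variable {G}

theorem succIndex_eq_some {u v : V} {i : Fin k} (h : G.succs u i = some v) :
    G.succIndex u v = some i := by
  have hadj : G.Adj u v := ⟨i, h⟩
  rw [succIndex, dif_pos hadj,
    G.distinct u _ i (by simp [hadj.choose_spec]) (hadj.choose_spec.trans h.symm)]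

theorem succIndex_bind_succs {u v : V} (h : G.Adj u v) :
    (G.succIndex u v).bind (G.succs u) = some v := by
  obtain ⟨i, hi⟩ := h
  rw [succIndex_eq_some hi, Option.bind_some, hi]

theorem succs_bind_succIndex {u : V} {i : Fin k} (h : (G.succs u i).isSome) :
    (G.succs u i).bind (G.succIndex u) = some i := by
  obtain ⟨v, hv⟩ := Option.isSome_iff_exists.mp h
  rw [hv, Option.bind_some, succIndex_eq_some hv]

theorem follow_append_singleton (u : V) (p : List (Fin k)) (i : Fin k) :
    G.follow u (p ++ [i]) =
      (G.follow u p).bind fun lw => (G.succs lw.2 i).map fun v => (lw.1 ++ [v], v) := by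
  induction p generalizing u with
  | nil => cases h : G.succs u i <;> simp [follow, h]
  | cons j p ih =>
    cases hj : G.succs u j with
    | none => simp [follow, hj]
    | some v =>
      simp only [List.cons_append, follow, hj, Option.bind_some, ih]
      cases hp : G.follow v p with
      | none => rfl
      | some lw => cases hi : G.succs lw.2 i <;> simp [hi]

theorem follow_spec {u : V} {p : List (Fin k)} {l : List V} {w : V}
    (h : G.follow u p = some (l, w)) :
    l.head? = some u ∧ l.IsChain G.Adj ∧ l.getLast? = some w := by
  induction p generalizing u l with
  | nil =>
    obtain ⟨rfl, rfl⟩ : [u] = l ∧ u = w := by simpa [follow] using h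
    simp
  | cons i p ih =>
    simp only [follow, Option.bind_eq_some_iff, Option.map_eq_some_iff] at h
    obtain ⟨v, hv, ⟨l', w'⟩, hl', ⟨⟩⟩ := h
    obtain ⟨hhead, hchain, hlast⟩ := ih hl'
    obtain ⟨l', rfl⟩ : ∃ t, l' = v :: t := ⟨l'.tail, List.eq_cons_of_mem_head? hhead⟩
    exact ⟨rfl, List.isChain_cons_cons.mpr ⟨⟨i, hv⟩, hchain⟩, by simpa using hlast⟩

theorem indexPath_of_follow {u : V} {p : List (Fin k)} {l : List V} {w : V}
    (h : G.follow u p = some (l, w)) : G.indexPath l = some p := by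
  induction p generalizing u l with
  | nil =>
    obtain ⟨rfl, rfl⟩ : [u] = l ∧ u = w := by simpa [follow] using h
    rfl
  | cons i p ih =>
    simp only [follow, Option.bind_eq_some_iff, Option.map_eq_some_iff] at h
    obtain ⟨v, hv, ⟨l', w'⟩, hl', ⟨⟩⟩ := h
    obtain ⟨l', rfl⟩ : ∃ t, l' = v :: t :=
      ⟨l'.tail, List.eq_cons_of_mem_head? (follow_spec hl').1⟩
    simp [indexPath, succIndex_eq_some hv, ih hl']

theorem exists_follow_of_isChain {u : V} {l : List V} (h : (u :: l).IsChain G.Adj) :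
    ∃ p w, G.follow u p = some (u :: l, w) := by
  induction l generalizing u with
  | nil => exact ⟨[], u, rfl⟩
  | cons v l ih =>
    obtain ⟨⟨i, hi⟩, hl⟩ := List.isChain_cons_cons.mp h
    obtain ⟨p, w, hp⟩ := ih hl
    exact ⟨i :: p, w, by simp [follow, hi, hp]⟩

end ModGame

def Lab.move {V : Type} {k : ℕ} : Lab V k → Option (Fin k)
  | .dummy => none
  | .nd _ c => c

section Correspondence

variable {V : Type} {k : ℕ} {G : ModGame V k} {m : G.M} {p : List (Fin k)} {l : List V} {w : V}

theorem validMem_iff_exists_follow :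
    ValidMem G m l ↔ ∃ p w, G.follow (G.entry m) p = some (l, w) := by
  constructor
  · rintro ⟨hhead, hchain⟩
    obtain ⟨l, rfl⟩ : ∃ t, l = G.entry m :: t := ⟨l.tail, List.eq_cons_of_mem_head? hhead⟩
    exact ModGame.exists_follow_of_isChain hchain
  · rintro ⟨p, w, h⟩
    exact ⟨(ModGame.follow_spec h).1, (ModGame.follow_spec h).2.1⟩

namespace ModStrat

variable (s : ModStrat G)

theorem f_eq_none_of_not_validMem (h : ¬ ValidMem G m l) : s.f m l = none :=
  Option.not_isSome_iff_eq_none.mp fun hs => h ((s.dom m l).mp hs).1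

theorem f_eq_none_of_not_isP0 (hl : l.getLast? = some w) (hw : ¬ G.isP0 w) :
    s.f m l = none :=
  Option.not_isSome_iff_eq_none.mp fun hs => by
    obtain ⟨-, v, hv, hP0⟩ := (s.dom m l).mp hs
    obtain rfl : w = v := Option.some_inj.mp (hl.symm.trans hv)
    exact hw hP0

noncomputable def lab (m : G.M) (p : List (Fin k)) : Lab V k :=
  match G.follow (G.entry m) p with
  | none => .dummy
  | some (l, w) => .nd w ((s.f m l).bind (G.succIndex w))

theorem lab_of_follow_eq_none (h : G.follow (G.entry m) p = none) : s.lab m p = .dummy := by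
  simp [lab, h]

theorem lab_of_follow_eq_some (h : G.follow (G.entry m) p = some (l, w)) :
    s.lab m p = .nd w ((s.f m l).bind (G.succIndex w)) := by
  simp [lab, h]

theorem follow_eq_none_of_lab_eq_dummy (h : s.lab m p = .dummy) :
    G.follow (G.entry m) p = none := by
  cases hr : G.follow (G.entry m) p with
  | none => rfl
  | some lw => simp [s.lab_of_follow_eq_some (l := lw.1) (w := lw.2) hr] at h

theorem exists_follow_of_lab_eq_nd {v : V} {c : Option (Fin k)} (h : s.lab m p = .nd v c) :
    ∃ l, G.follow (G.entry m) p = some (l, v) ∧ c = (s.f m l).bind (G.succIndex v) := by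
  cases hr : G.follow (G.entry m) p with
  | none => simp [s.lab_of_follow_eq_none hr] at h
  | some lw =>
    obtain ⟨l, w⟩ := lw
    obtain ⟨rfl, rfl⟩ := Lab.nd.inj ((s.lab_of_follow_eq_some hr).symm.trans h)
    exact ⟨l, rfl, rfl⟩

theorem lab_move_bind_succs (h : G.follow (G.entry m) p = some (l, w)) :
    (s.lab m p).move.bind (G.succs w) = s.f m l := by
  rw [s.lab_of_follow_eq_some h, Lab.move]
  cases hf : s.f m l with
  | none => rfl
  | some v =>
    exact ModGame.succIndex_bind_succs (s.legal m l v w (ModGame.follow_spec h).2.2 hf)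

noncomputable def toTree : StrategyTree G where
  lab := s.lab
  root m := ⟨_, s.lab_of_follow_eq_some rfl⟩
  child_nd m p v c i h := by
    obtain ⟨l, hr, -⟩ := s.exists_follow_of_lab_eq_nd h
    have hi := G.follow_append_singleton (G.entry m) p i
    rw [hr, Option.bind_some] at hi
    exact ⟨fun v' hv' => ⟨_, s.lab_of_follow_eq_some (by rw [hi, hv']; rfl)⟩,
      fun hv => s.lab_of_follow_eq_none (by rw [hi, hv]; rfl)⟩
  child_dummy m p i h := s.lab_of_follow_eq_none (by
    rw [G.follow_append_singleton, s.follow_eq_none_of_lab_eq_dummy h]; rfl)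
  choice m p v c h := by
    obtain ⟨l, hr, rfl⟩ := s.exists_follow_of_lab_eq_nd h
    obtain ⟨hhead, hchain, hlast⟩ := ModGame.follow_spec hr
    refine ⟨fun hv => ?_, fun hv => by rw [s.f_eq_none_of_not_isP0 hlast hv]; rfl⟩
    obtain ⟨u, hu⟩ := Option.isSome_iff_exists.mp
      ((s.dom m l).mpr ⟨⟨hhead, hchain⟩, v, hlast, hv⟩)
    obtain ⟨i, hi⟩ := s.legal m l u v hlast hu
    exact ⟨i, by rw [hu, Option.bind_some, ModGame.succIndex_eq_some hi], by simp [hi]⟩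

end ModStrat

namespace StrategyTree

variable (t : StrategyTree G)

theorem lab_of_follow_eq_some (h : G.follow (G.entry m) p = some (l, w)) :
    ∃ c, t.lab m p = .nd w c := by
  induction p using List.reverseRecOn generalizing l w with
  | nil =>
    obtain ⟨rfl, rfl⟩ : [G.entry m] = l ∧ G.entry m = w := by simpa [ModGame.follow] using h
    exact t.root m
  | append_singleton p i ih =>
    rw [ModGame.follow_append_singleton, Option.bind_eq_some_iff] at h
    obtain ⟨⟨l', w'⟩, hr, h⟩ := h
    obtain ⟨v, hv, ⟨⟩⟩ := Option.map_eq_some_iff.mp h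
    obtain ⟨c, hc⟩ := ih hr
    exact (t.child_nd m p w' c i hc).1 _ hv

theorem lab_of_follow_eq_none (h : G.follow (G.entry m) p = none) : t.lab m p = .dummy := by
  induction p using List.reverseRecOn with
  | nil => simp [ModGame.follow] at h
  | append_singleton p i ih =>
    cases hr : G.follow (G.entry m) p with
    | none => exact t.child_dummy m p i (ih hr)
    | some lw =>
      rw [ModGame.follow_append_singleton, hr, Option.bind_some, Option.map_eq_none_iff] at h
      obtain ⟨c, hc⟩ := t.lab_of_follow_eq_some (l := lw.1) hr
      exact (t.child_nd m p lw.2 c i hc).2 h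

theorem isSome_succs_of_lab_eq {j : Fin k} (h : t.lab m p = .nd w (some j)) :
    (G.succs w j).isSome := by
  by_cases hw : G.isP0 w
  · obtain ⟨j', hj', hs⟩ := (t.choice m p w _ h).1 hw
    rwa [Option.some_inj.mp hj']
  · cases (t.choice m p w _ h).2 hw

open Classical in
noncomputable def move (m : G.M) (l : List V) : Option V :=
  if ValidMem G m l then
    l.getLast?.bind fun w => (G.indexPath l).bind fun p => (t.lab m p).move.bind (G.succs w)
  else none

theorem move_of_not_validMem (h : ¬ ValidMem G m l) : t.move m l = none := if_neg h

theorem move_of_follow_eq_some (h : G.follow (G.entry m) p = some (l, w)) :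
    t.move m l = (t.lab m p).move.bind (G.succs w) := by
  obtain ⟨hhead, hchain, hlast⟩ := ModGame.follow_spec h
  rw [move, if_pos ⟨hhead, hchain⟩, hlast, Option.bind_some, ModGame.indexPath_of_follow h,
    Option.bind_some]

theorem move_bind_succIndex (h : G.follow (G.entry m) p = some (l, w)) :
    (t.move m l).bind (G.succIndex w) = (t.lab m p).move := by
  obtain ⟨c, hc⟩ := t.lab_of_follow_eq_some h
  rw [t.move_of_follow_eq_some h, hc, Lab.move]
  cases c with
  | none => rfl
  | some j => exact ModGame.succs_bind_succIndex (t.isSome_succs_of_lab_eq hc)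

noncomputable def toStrat : ModStrat G where
  f := t.move
  dom m l := by
    by_cases hl : ValidMem G m l
    · obtain ⟨p, w, hr⟩ := validMem_iff_exists_follow.mp hl
      obtain ⟨c, hc⟩ := t.lab_of_follow_eq_some hr
      rw [t.move_of_follow_eq_some hr, hc, (ModGame.follow_spec hr).2.2]
      simp only [hl, true_and, Option.some_inj, exists_eq_left', Lab.move]
      constructor
      · intro hs
        by_contra hw
        simp [(t.choice m p w c hc).2 hw] at hs
      · intro hw
        obtain ⟨j, rfl, hj⟩ := (t.choice m p w c hc).1 hw
        simpa using hj
    · simp [t.move_of_not_validMem hl, hl]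
  legal m l v u hl hv := by
    by_cases hval : ValidMem G m l
    · obtain ⟨p, w, hr⟩ := validMem_iff_exists_follow.mp hval
      obtain rfl : u = w := Option.some_inj.mp (hl.symm.trans (ModGame.follow_spec hr).2.2)
      rw [t.move_of_follow_eq_some hr] at hv
      obtain ⟨j, -, hj⟩ := Option.bind_eq_some_iff.mp hv
      exact ⟨j, hj⟩
    · simp [t.move_of_not_validMem hval] at hv

end StrategyTree

theorem ModStrat.toStrat_toTree (s : ModStrat G) : s.toTree.toStrat = s := by
  have hf : s.toTree.move = s.f := by
    funext m l
    by_cases hl : ValidMem G m l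
    · obtain ⟨p, w, hr⟩ := validMem_iff_exists_follow.mp hl
      exact (s.toTree.move_of_follow_eq_some hr).trans (s.lab_move_bind_succs hr)
    · rw [StrategyTree.move_of_not_validMem _ hl, s.f_eq_none_of_not_validMem hl]
  cases s
  simp only [StrategyTree.toStrat, hf]

theorem StrategyTree.toTree_toStrat (t : StrategyTree G) : t.toStrat.toTree = t := by
  have hlab : t.toStrat.lab = t.lab := by
    funext m p
    cases hr : G.follow (G.entry m) p with
    | none => rw [ModStrat.lab_of_follow_eq_none _ hr, t.lab_of_follow_eq_none hr]
    | some lw =>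
      obtain ⟨c, hc⟩ := t.lab_of_follow_eq_some hr
      rw [ModStrat.lab_of_follow_eq_some _ hr, hc]
      exact congrArg _ ((t.move_bind_succIndex hr).trans (by rw [hc]; rfl))
  cases t
  simp only [ModStrat.toTree, hlab]

end Correspondence

/-- There is a one-to-one correspondence between the modular strategies of
the fixed player and the strategy trees encoding them. -/
theorem stmt5 {V : Type} {k : ℕ} (G : ModGame V k) :
    Nonempty (ModStrat G ≃ StrategyTree G) :=
  ⟨⟨ModStrat.toTree, StrategyTree.toStrat, ModStrat.toStrat_toTree,
    StrategyTree.toTree_toStrat⟩⟩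
end

section
/- Correctness of the top-symbol tracking in the VPA-to-finite-automaton reduction: let P be a VPA with stack alphabet Γ ∪ {γ⊥}, and consider the run of P over a well-nested prefix of an ω-word. After processing any prefix, the top stack symbol of P is determined by: γ⊥ if all calls so far are matched or the stack is empty, and otherwise the symbol pushed at the most recent unmatched call. Hence a finite-state device that records only the symbol pushed at the innermost pending call, and upon each return receives (from an external oracle/player declaration verified against its record) the symbol pushed at the next-outer pending call, correctly maintains the top-of-stack symbol of P throughout the run. -/
/-!
Only calls make the stack grow; every other step leaves a suffix. Hence each symbol on the
stack was pushed by some call, and the stack has stayed above its height before that push ever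
since, so that call is pending. Applied to the top symbol this gives a pending call `j`
whose push produced the current stack; any later pending call would have to sit strictly
above height `|stack j|` yet strictly below `|stack n| = |stack j| + 1`, so `j` is the last one.
-/

/-- A pending (unmatched) call of the prefix of length n: a call position
i < n after which the stack never returns to height ≤ height at i within the
prefix. -/
def Pending {Γ : Type} (stack : ℕ → List Γ) (isCall : ℕ → Prop)
    (i n : ℕ) : Prop :=
  i < n ∧ isCall i ∧ ∀ h, i < h → h ≤ n →
    (stack i).length < (stack h).length

section
variable {Γ : Type} {stack : ℕ → List Γ} {isCall : ℕ → Prop}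

theorem Pending.le_of_length_eq_succ {i j n : ℕ} (hj : Pending stack isCall j n)
    (hlen : (stack n).length = (stack j).length + 1) (hi : Pending stack isCall i n) :
    i ≤ j := by
  by_contra! hji
  have hj_lt_i := hj.2.2 i hji hi.1.le
  have hi_lt_n := hi.2.2 n hi.1 le_rfl
  omega

theorem exists_push_of_cons_suffix (h0 : stack 0 = [])
    (hrun : ∀ i, (isCall i ∧ ∃ γ, stack (i + 1) = γ :: stack i) ∨ stack (i + 1) <:+ stack i)
    {n : ℕ} {γ : Γ} {t : List Γ} (hsuf : γ :: t <:+ stack n) :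
    ∃ i < n, isCall i ∧ stack i = t ∧ stack (i + 1) = γ :: t ∧
      ∀ h, i < h → h ≤ n → t.length < (stack h).length := by
  induction n with
  | zero => simp [h0] at hsuf
  | succ n ih =>
    have hcases : (isCall n ∧ stack n = t ∧ stack (n + 1) = γ :: t) ∨ γ :: t <:+ stack n := by
      rcases hrun n with ⟨hcall, δ, hpush⟩ | hshrink
      · rw [hpush, List.suffix_cons_iff] at hsuf
        rcases hsuf with heq | hsuf
        · obtain ⟨rfl, rfl⟩ := List.cons.inj heq
          exact .inl ⟨hcall, rfl, hpush⟩
        · exact .inr hsuf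
      · exact .inr (hsuf.trans hshrink)
    rcases hcases with ⟨hcall, hbelow, hpush⟩ | hsuf'
    · refine ⟨n, n.lt_succ_self, hcall, hbelow, hpush, fun h hnh hhn => ?_⟩
      obtain rfl : h = n + 1 := by omega
      simp [hpush]
    · obtain ⟨i, hin, hcall, hbelow, hpush, habove⟩ := ih hsuf'
      refine ⟨i, by omega, hcall, hbelow, hpush, fun h hih hhn => ?_⟩
      rcases Nat.lt_or_ge h (n + 1) with hlt | hge
      · exact habove h hih (by omega)
      · obtain rfl : h = n + 1 := by omega
        have := hsuf.length_le
        simp only [List.length_cons] at this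
        omega

theorem exists_pending_push_eq (h0 : stack 0 = [])
    (hrun : ∀ i, (isCall i ∧ ∃ γ, stack (i + 1) = γ :: stack i) ∨ stack (i + 1) <:+ stack i)
    {n : ℕ} (hne : stack n ≠ []) :
    ∃ j, Pending stack isCall j n ∧ stack (j + 1) = stack n ∧
      (stack n).length = (stack j).length + 1 := by
  obtain ⟨γ, t, htop⟩ := List.exists_cons_of_ne_nil hne
  have hsuf : γ :: t <:+ stack n := htop ▸ List.suffix_refl _
  obtain ⟨j, hjn, hcall, hbelow, hpush, habove⟩ := exists_push_of_cons_suffix h0 hrun hsuf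
  subst hbelow
  exact ⟨j, ⟨hjn, hcall, habove⟩, by rw [hpush, htop], by simp [htop]⟩

end

/-- Correctness of top-symbol tracking in the VPA-to-finite-automaton
reduction: along a run of a VPA (push one symbol on calls, pop one on
returns with pops on the empty stack leaving it empty — i.e. only γ⊥ —
unchanged on internal letters), after any prefix the top stack symbol is the
symbol pushed at the most recent pending call, and the stack is empty (top
symbol γ⊥) when there is no pending call. -/
theorem stmt15 {Γ : Type} (stack : ℕ → List Γ) (isCall isRet : ℕ → Prop)
    (h0 : stack 0 = [])
    (hstep : ∀ i,
        (isCall i ∧ ∃ γ, stack (i + 1) = γ :: stack i)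
      ∨ (isRet i ∧ ((∃ γ, stack i = γ :: stack (i + 1))
          ∨ (stack i = [] ∧ stack (i + 1) = [])))
      ∨ (¬ isCall i ∧ ¬ isRet i ∧ stack (i + 1) = stack i))
    (n : ℕ) :
    ((¬ ∃ i, Pending stack isCall i n) → stack n = []) ∧
    (∀ i, Pending stack isCall i n →
      (∀ i', Pending stack isCall i' n → i' ≤ i) →
      stack n ≠ [] ∧ (stack n).head? = (stack (i + 1)).head?) := by
  have hrun : ∀ i, (isCall i ∧ ∃ γ, stack (i + 1) = γ :: stack i) ∨ stack (i + 1) <:+ stack i := by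
    intro i
    rcases hstep i with hpush | ⟨-, ⟨γ, hpop⟩ | ⟨-, hempty⟩⟩ | ⟨-, -, hsame⟩
    · exact .inl hpush
    · exact .inr (hpop ▸ List.suffix_cons γ _)
    · exact .inr (hempty ▸ List.nil_suffix)
    · exact .inr (hsame ▸ List.suffix_refl _)
  constructor
  · intro hnone
    by_contra hne
    obtain ⟨j, hj, -⟩ := exists_pending_push_eq h0 hrun hne
    exact hnone ⟨j, hj⟩
  · intro i hi hlast
    have hne : stack n ≠ [] :=
      List.ne_nil_of_length_pos (Nat.zero_lt_of_lt (hi.2.2 n hi.1 le_rfl))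
    obtain ⟨j, hj, hpush, hlen⟩ := exists_pending_push_eq h0 hrun hne
    obtain rfl : j = i := le_antisymm (hlast j hj) (hj.le_of_length_eq_succ hlen hi)
    exact ⟨hne, by rw [hpush]⟩
end
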